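/- Let 1 ≤ n and k ≥ 1 with n + k ≤ g. Let v_1, …, v_n ∈ H satisfy gcd(v_1,…,v_n) = 1, and let D be a dual summand for v_1,…,v_n with basis u_1,…,u_n (so ω(v_i,u_j) = δ_{ij}). Let w_1, …, w_k ∈ H be given with gcd(v_1,…,v_n,w_1,…,w_k) = 1. Then there exist vectors u′_1, …, u′_{n+k} ∈ H spanning an isotropic direct summand D_2 of rank n + k which is a dual summand for the family (x_1,…,x_{n+k}) = (v_1,…,v_n,w_1,…,w_k) (i.e. ω(x_i,u′_j) = δ_{ij}), and such that span_ℤ(v_1,…,v_n) + D ⊆ span_ℤ(v_1,…,v_n,w_1,…,w_k) + D_2. -/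

import Mathlib

/-!
Adjoining the `w`'s one at a time, it suffices to add a single vector `w`. Put `S = span (v, u)`.
As `ω(v_i, u_j) = δ_ij` and `u` is isotropic, `H = S ⊕ S^⊥`, so `w = s + d t₀` with `s ∈ S` and
`t₀ ∈ S^⊥` primitive (if `w ∈ S`, any primitive `t₀ ≠ 0` of `S^⊥`, which exists because `n < g`).
Choose `y₀ ∈ S^⊥` with `ω(t₀, y₀) = 1`, and, since `gcd(v, w) = 1`, a vector `y` with
`ω(v_i, y) = 0` and `ω(w, y) = 1`. Modifying the `S^⊥`-component of `y` gives `U` with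
`ω(v_i, U) = 0`, `ω(w, U) = ω(U, y₀) = 1` and `w ∈ S + span (U, y₀)`. Correcting each `u_j` by
multiples of `y₀` and `U` yields an isotropic family `(u', U)` dual to `(v, w)`, and the
transvection `z ↦ z + ω(z, U) y₀` shows that `span (v, w, u', U)` still contains `u`. Finally,
`u'` is unimodular because it has a dual family.
-/

namespace Paper

/-- The standard symplectic form on `R^{2g}` with respect to the basis
`a_1, b_1, …, a_g, b_g` (coordinates `2i, 2i+1` for `a_{i+1}, b_{i+1}`). -/
def symp {R : Type*} [CommRing R] {g : ℕ} (x y : Fin (2 * g) → R) : R :=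
  ∑ i : Fin g,
    (x ⟨2 * i.1, by omega⟩ * y ⟨2 * i.1 + 1, by omega⟩ -
      x ⟨2 * i.1 + 1, by omega⟩ * y ⟨2 * i.1, by omega⟩)

theorem symp_add_left {R : Type*} [CommRing R] {g : ℕ} (x y a : Fin (2 * g) → R) :
    symp (x + y) a = symp x a + symp y a := by
  unfold symp
  rw [← Finset.sum_add_distrib]
  exact Finset.sum_congr rfl fun i _ => by simp only [Pi.add_apply]; ring

theorem symp_smul_left {R : Type*} [CommRing R] {g : ℕ} (c : R) (x a : Fin (2 * g) → R) :
    symp (c • x) a = c * symp x a := by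
  unfold symp
  rw [Finset.mul_sum]
  exact Finset.sum_congr rfl fun i _ => by simp only [Pi.smul_apply, smul_eq_mul]; ring

theorem symp_zero_left {R : Type*} [CommRing R] {g : ℕ} (a : Fin (2 * g) → R) :
    symp (0 : Fin (2 * g) → R) a = 0 := by
  unfold symp; simp

/-- The orthogonal complement `A^⊥ = {x | ω(x,a) = 0 for all a ∈ A}`. -/
def perp {R : Type*} [CommRing R] {g : ℕ} (A : Set (Fin (2 * g) → R)) :
    Submodule R (Fin (2 * g) → R) where
  carrier := {x | ∀ a ∈ A, symp x a = 0}
  add_mem' := by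
    intro x y hx hy a ha
    rw [symp_add_left, hx a ha, hy a ha, add_zero]
  zero_mem' := by
    intro a ha
    exact symp_zero_left a
  smul_mem' := by
    intro c x hx a ha
    rw [symp_smul_left, hx a ha, mul_zero]

/-- The submodule of vectors whose first `m` coordinates vanish.
`H_k = coordZero R (2*g) (2*(k-1))`, and `H₂ = coordZero R (2*(g+1)) 2`. -/
def coordZero (R : Type*) [CommRing R] (n m : ℕ) : Submodule R (Fin n → R) where
  carrier := {v | ∀ j : Fin n, (j : ℕ) < m → v j = 0}
  add_mem' := by
    intro x y hx hy j hj
    have h1 := hx j hj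
    have h2 := hy j hj
    simp [Pi.add_apply, h1, h2]
  zero_mem' := by intro j hj; rfl
  smul_mem' := by
    intro c x hx j hj
    have h1 := hx j hj
    simp [Pi.smul_apply, h1]

/-- The standard basis vector `a_{i+1}` (`i` is 0-indexed). -/
def stdA (R : Type*) [CommRing R] (g i : ℕ) : Fin (2 * g) → R :=
  fun j => if (j : ℕ) = 2 * i then 1 else 0

/-- The standard basis vector `b_{i+1}` (`i` is 0-indexed). -/
def stdB (R : Type*) [CommRing R] (g i : ℕ) : Fin (2 * g) → R :=
  fun j => if (j : ℕ) = 2 * i + 1 then 1 else 0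

/-- Regard an integer vector as a rational vector. -/
def qcast {n : ℕ} (v : Fin n → ℤ) : Fin n → ℚ := fun j => (v j : ℚ)

/-- The projection `pr₂` deleting the `a_1`- and `b_1`-coordinates. -/
def pr2 {R : Type*} [CommRing R] {n : ℕ} (v : Fin n → R) : Fin n → R :=
  fun j => if (j : ℕ) < 2 then 0 else v j

/-- `gcd(v_1, …, v_m) = 1`: the vectors are linearly independent and their
ℤ-span is a direct summand. -/
def IsUnimodular {n m : ℕ} (v : Fin m → Fin n → ℤ) : Prop :=
  LinearIndependent ℤ v ∧
    ∃ C : Submodule ℤ (Fin n → ℤ), IsCompl (Submodule.span ℤ (Set.range v)) C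

/-- A primitive vector. -/
def Primitive {n : ℕ} (v : Fin n → ℤ) : Prop := IsUnimodular ![v]

/-- The entries of `w` are pairwise `ω`-orthogonal. -/
def PairwiseOrth {g m : ℕ} (w : Fin m → Fin (2 * g) → ℤ) : Prop :=
  ∀ i j, i ≠ j → symp (w i) (w j) = 0

/-- `Λ³ W`: the span of all wedges of three vectors from `W` inside the
exterior algebra. -/
def wedge3 {g : ℕ} (W : Submodule ℚ (Fin (2 * g) → ℚ)) :
    Submodule ℚ (ExteriorAlgebra ℚ (Fin (2 * g) → ℚ)) :=
  Submodule.span ℚ {x | ∃ z₁ ∈ W, ∃ z₂ ∈ W, ∃ z₃ ∈ W,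
    x = ExteriorAlgebra.ι ℚ z₁ * ExteriorAlgebra.ι ℚ z₂ * ExteriorAlgebra.ι ℚ z₃}

/-- `u ∧ Λ² W`. -/
def uWedge2 {g : ℕ} (u : Fin (2 * g) → ℚ) (W : Submodule ℚ (Fin (2 * g) → ℚ)) :
    Submodule ℚ (ExteriorAlgebra ℚ (Fin (2 * g) → ℚ)) :=
  Submodule.span ℚ {x | ∃ z₁ ∈ W, ∃ z₂ ∈ W,
    x = ExteriorAlgebra.ι ℚ u * ExteriorAlgebra.ι ℚ z₁ * ExteriorAlgebra.ι ℚ z₂}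

/-- `u ∧ u' ∧ W`. -/
def uuWedge1 {g : ℕ} (u u' : Fin (2 * g) → ℚ) (W : Submodule ℚ (Fin (2 * g) → ℚ)) :
    Submodule ℚ (ExteriorAlgebra ℚ (Fin (2 * g) → ℚ)) :=
  Submodule.span ℚ {x | ∃ z ∈ W,
    x = ExteriorAlgebra.ι ℚ u * ExteriorAlgebra.ι ℚ u' * ExteriorAlgebra.ι ℚ z}

/-- The simplicial differential: on the summand indexed by `w` it sends `z` to
`Σ_j (-1)^j · z` placed in the summand indexed by `∂_j w`. -/
noncomputable def diff (g p : ℕ)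
    (ξ : (Fin (p + 1) → Fin (2 * g) → ℤ) →₀ ExteriorAlgebra ℚ (Fin (2 * g) → ℚ)) :
    (Fin p → Fin (2 * g) → ℤ) →₀ ExteriorAlgebra ℚ (Fin (2 * g) → ℚ) :=
  ξ.sum fun w z =>
    ∑ j : Fin (p + 1), ((-1 : ℚ) ^ (j : ℕ)) • Finsupp.single (fun i => w (j.succAbove i)) z

/-- The gcd of the determinants of all maximal square submatrices of the matrix
whose columns are the `v i`. -/
def vgcd {ι : Type*} [Fintype ι] {m : ℕ} (v : Fin m → ι → ℤ) : ℕ :=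
  Finset.univ.gcd fun r : Fin m → ι => (Matrix.det (Matrix.of fun i j => v j (r i))).natAbs

open Submodule Set

section DualPairs

variable {R M N ι : Type*} [CommRing R] [AddCommGroup M] [Module R M] [AddCommGroup N] [Module R N]

def IsDualPair [DecidableEq ι] (B : M →ₗ[R] N →ₗ[R] R) (x : ι → M) (y : ι → N) : Prop :=
  ∀ i j, B (x i) (y j) = if i = j then 1 else 0

def IsIsotropic (B : LinearMap.BilinForm R M) (y : ι → M) : Prop :=
  ∀ i j, B (y i) (y j) = 0

variable [DecidableEq ι] {B : M →ₗ[R] N →ₗ[R] R} {x : ι → M} {y : ι → N}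

theorem IsDualPair.flip (h : IsDualPair B x y) : IsDualPair B.flip y x := fun i j => by
  simp [h j i, eq_comm]

theorem IsDualPair.comp {κ : Type*} [DecidableEq κ] (h : IsDualPair B x y) {f : κ → ι}
    (hf : Function.Injective f) : IsDualPair B (x ∘ f) (y ∘ f) := fun i j => by
  simp [h (f i) (f j), hf.eq_iff]

theorem IsDualPair.leftInverse [Fintype ι] (h : IsDualPair B x y) :
    Function.LeftInverse (LinearMap.pi fun j => B.flip (y j)) (Fintype.linearCombination R x) :=
  fun c => funext fun j => by simp [Fintype.linearCombination_apply, h _ j]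

theorem IsDualPair.isUnimodular {n m : ℕ} {B : (Fin n → ℤ) →ₗ[ℤ] N →ₗ[ℤ] ℤ}
    {x : Fin m → Fin n → ℤ} {y : Fin m → N} (h : IsDualPair B x y) : IsUnimodular x := by
  set L := Fintype.linearCombination ℤ x
  set ψ : (Fin n → ℤ) →ₗ[ℤ] Fin m → ℤ := LinearMap.pi fun j => B.flip (y j)
  have hproj : IsIdempotentElem (L ∘ₗ ψ) := LinearMap.ext fun z => by
    change L (ψ (L (ψ z))) = L (ψ z)
    rw [h.leftInverse (ψ z)]
  have hrange : LinearMap.range (L ∘ₗ ψ) = span ℤ (range x) := by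
    rw [LinearMap.range_comp_of_range_eq_top _ (LinearMap.range_eq_top.2 h.leftInverse.surjective),
      Fintype.range_linearCombination]
  exact ⟨linearIndependent_iff_injective_fintypeLinearCombination.2 h.leftInverse.injective,
    _, hrange ▸ LinearMap.IsIdempotentElem.isCompl hproj⟩

theorem exists_isDualPair_of_isCompl (hB : Function.Surjective B.flip)
    (hx : LinearIndependent R x) {C : Submodule R M} (hC : IsCompl (span R (range x)) C) :
    ∃ y : ι → N, IsDualPair B x y := by
  let b := Module.Basis.span hx
  choose y hy using fun j => hB ((b.coord j).comp ((span R (range x)).projectionOnto C hC))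
  refine ⟨y, fun i j => ?_⟩
  rw [← LinearMap.flip_apply, hy, LinearMap.comp_apply,
    projectionOnto_apply_of_mem_left hC (subset_span (mem_range_self i)),
    ← Module.Basis.span_apply hx, Module.Basis.coord_apply, Module.Basis.repr_self,
    Finsupp.single_apply]

end DualPairs

section AlternatingForms

variable {R M : Type*} [CommRing R] [AddCommGroup M] [Module R M] {B : LinearMap.BilinForm R M}

theorem IsDualPair.snoc {n : ℕ} {x y : Fin n → M} {a b : M} (h : IsDualPair B x y)
    (hxb : ∀ i, B (x i) b = 0) (hay : ∀ j, B a (y j) = 0) (hab : B a b = 1) :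
    IsDualPair B (Fin.snoc x a : Fin (n + 1) → M) (Fin.snoc y b) := by
  intro i j
  induction i using Fin.lastCases <;> induction j using Fin.lastCases <;>
    simp [h _ _, hxb, hay, hab, Fin.castSucc_ne_last, (Fin.castSucc_ne_last _).symm]

theorem IsIsotropic.snoc {n : ℕ} (hB : B.IsAlt) {y : Fin n → M} {b : M} (h : IsIsotropic B y)
    (hyb : ∀ i, B (y i) b = 0) : IsIsotropic B (Fin.snoc y b : Fin (n + 1) → M) := by
  intro i j
  induction i using Fin.lastCases <;> induction j using Fin.lastCases <;>
    simp [h _ _, hyb, hB.eq_iff.1 (hyb _), hB.self_eq_zero]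

variable {ι : Type*} {v u : ι → M}

theorem mem_orthogonalBilin_sup_span_iff {m : M} :
    m ∈ (span R (range v) ⊔ span R (range u)).orthogonalBilin B ↔
      (∀ i, B (v i) m = 0) ∧ ∀ i, B (u i) m = 0 := by
  refine ⟨fun h => ⟨fun i => h _ (mem_sup_left (subset_span (mem_range_self i))),
    fun i => h _ (mem_sup_right (subset_span (mem_range_self i)))⟩, fun ⟨hv, hu⟩ s hs => ?_⟩
  have : span R (range v) ⊔ span R (range u) ≤ LinearMap.ker (B.flip m) :=
    sup_le (span_le.2 (range_subset_iff.2 hv)) (span_le.2 (range_subset_iff.2 hu))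
  exact this hs

variable [Fintype ι] [DecidableEq ι]

theorem IsDualPair.sup_orthogonalBilin_eq_top (hB : B.IsAlt) (hvu : IsDualPair B v u)
    (hu : IsIsotropic B u) :
    span R (range v) ⊔ span R (range u) ⊔
      (span R (range v) ⊔ span R (range u)).orthogonalBilin B = ⊤ := by
  refine eq_top_iff.2 fun z _ => ?_
  set z' := z - ∑ i, B z (u i) • v i
  set s := ∑ i, B z (u i) • v i + ∑ i, B (v i) z' • u i
  have hs : s ∈ span R (range v) ⊔ span R (range u) :=
    add_mem_sup (sum_mem fun i _ => smul_mem _ _ (subset_span (mem_range_self i)))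
      (sum_mem fun i _ => smul_mem _ _ (subset_span (mem_range_self i)))
  have huv : ∀ i j, B (u i) (v j) = -if j = i then 1 else 0 := fun i j => by
    rw [← hB.neg_eq, hvu j i]
  refine mem_sup.2 ⟨s, hs, z - s,
    mem_orthogonalBilin_sup_span_iff.2 ⟨fun j => ?_, fun j => ?_⟩, add_sub_cancel s z⟩
  · simp [s, z', sub_add_eq_sub_sub, hvu _ _]
  · simp [s, sub_add_eq_sub_sub, huv _ _, hu _ _, ← hB.neg_eq z]

theorem orthogonalBilin_sup_span_ne_bot [Nontrivial R] (hB : B.IsAlt) (hvu : IsDualPair B v u)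
    (hu : IsIsotropic B u) (hrank : 2 * Fintype.card ι < Module.finrank R M) :
    (span R (range v) ⊔ span R (range u)).orthogonalBilin B ≠ ⊥ := by
  intro h
  have htop := hvu.sup_orthogonalBilin_eq_top hB hu
  rw [h, sup_bot_eq, ← span_union, ← Set.Sum.elim_range] at htop
  have hle := finrank_range_le_card (R := R) (Sum.elim v u)
  rw [Set.finrank, htop, finrank_top, Fintype.card_sum] at hle
  omega

theorem exists_dual_vector_of_hyperbolic_pair (hB : B.IsAlt) (hvu : IsDualPair B v u)
    (hu : IsIsotropic B u) {w y t₀ y₀ : M} {d : R} (hyv : ∀ i, B (v i) y = 0)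
    (hwy : B w y = 1)
    (ht₀ : t₀ ∈ (span R (range v) ⊔ span R (range u)).orthogonalBilin B)
    (hy₀ : y₀ ∈ (span R (range v) ⊔ span R (range u)).orthogonalBilin B)
    (ht₀y₀ : B t₀ y₀ = 1)
    (hw : w - d • t₀ ∈ span R (range v) ⊔ span R (range u)) :
    ∃ U, (∀ i, B (v i) U = 0) ∧ B w U = 1 ∧ B U y₀ = 1 ∧
      w ∈ span R (range v) ⊔ span R (range u) ⊔ span R {U, y₀} := by
  set S := span R (range v) ⊔ span R (range u)
  have hvS : ∀ i, v i ∈ S := fun i => mem_sup_left (subset_span (mem_range_self i))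
  obtain ⟨s, hs, m, hm, rfl⟩ := mem_sup.1
    (hvu.sup_orthogonalBilin_eq_top hB hu ▸ mem_top : y ∈ S ⊔ S.orthogonalBilin B)
  set μ := B t₀ m
  have he : t₀ + μ • y₀ - m ∈ S.orthogonalBilin B :=
    sub_mem (add_mem ht₀ (smul_mem _ _ hy₀)) hm
  have ht₀e : B t₀ (t₀ + μ • y₀ - m) = 0 := by simp [hB.self_eq_zero, ht₀y₀, μ]
  -- Replacing the `S^⊥`-component `m` of `y` by `t₀ + μ • y₀` does not change the pairing with
  -- the `S^⊥`-component `d • t₀` of `w`.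
  refine ⟨s + t₀ + μ • y₀, fun i => ?_, ?_, ?_, ?_⟩
  · have hvs : B (v i) s = 0 := by simpa [hm _ (hvS i)] using hyv i
    simp [hvs, ht₀ _ (hvS i), hy₀ _ (hvS i)]
  · have hU : s + t₀ + μ • y₀ = (s + m) + (t₀ + μ • y₀ - m) := by abel
    rw [hU, map_add, hwy, ← sub_add_cancel w (d • t₀), map_add, LinearMap.add_apply, he _ hw,
      map_smul, LinearMap.smul_apply, ht₀e, smul_zero, zero_add, add_zero]
  · simp [hy₀ _ hs, ht₀y₀, hB.self_eq_zero]
  · refine mem_sup.2 ⟨w - d • t₀ - d • s, sub_mem hw (smul_mem _ _ hs),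
      d • (s + t₀ + μ • y₀) - (d * μ) • y₀, mem_span_pair.2 ⟨d, -(d * μ), ?_⟩, ?_⟩
    <;> module

end AlternatingForms

section Extension

variable {R M : Type*} [CommRing R] [AddCommGroup M] [Module R M] {B : LinearMap.BilinForm R M}
  {n : ℕ} {v u : Fin n → M}

theorem exists_isDualPair_snoc_of_dual_vector (hB : B.IsAlt) (hvu : IsDualPair B v u)
    (hu : IsIsotropic B u) {w U y₀ : M} (hvU : ∀ i, B (v i) U = 0) (hwU : B w U = 1)
    (hUy₀ : B U y₀ = 1)
    (hy₀ : y₀ ∈ (span R (range v) ⊔ span R (range u)).orthogonalBilin B)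
    (hw : w ∈ span R (range v) ⊔ span R (range u) ⊔ span R {U, y₀}) :
    ∃ u' : Fin (n + 1) → M, IsIsotropic B u' ∧
      IsDualPair B (Fin.snoc v w : Fin (n + 1) → M) u' ∧
      span R (range v) ⊔ span R (range u) ≤
        span R (range (Fin.snoc v w : Fin (n + 1) → M)) ⊔ span R (range u') := by
  obtain ⟨hvy₀, huy₀⟩ := mem_orthogonalBilin_sup_span_iff.1 hy₀
  have hy₀U : B y₀ U = -1 := by rw [← hB.neg_eq, hUy₀]
  have hUu : ∀ j, B U (u j) = -B (u j) U := fun j => (hB.neg_eq _ _).symm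
  have hy₀u : ∀ j, B y₀ (u j) = 0 := fun j => hB.eq_iff.1 (huy₀ j)
  set u₁ : Fin n → M := fun j =>
    u j + B (u j) U • y₀ - (B w (u j) + B w y₀ * B (u j) U) • U
  have hvu₁ : IsDualPair B v u₁ := fun i j => by simp [u₁, hvu i j, hvy₀, hvU]
  have hwu₁ : ∀ j, B w (u₁ j) = 0 := fun j => by simp [u₁, hwU]; ring
  have hu₁U : ∀ j, B (u₁ j) U = 0 := fun j => by simp [u₁, hy₀U, hB.self_eq_zero]
  have hiso : IsIsotropic B u₁ := fun i j => by
    simp [u₁, hu i j, huy₀, hy₀u, hUu, hy₀U, hUy₀, hB.self_eq_zero]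
    ring
  refine ⟨Fin.snoc u₁ U, hiso.snoc hB hu₁U, hvu₁.snoc hvU hwu₁ hwU, ?_⟩
  set T := span R (range (Fin.snoc v w : Fin (n + 1) → M)) ⊔
    span R (range (Fin.snoc u₁ U : Fin (n + 1) → M))
  have hvT : ∀ i, v i ∈ T := fun i => mem_sup_left (subset_span ⟨i.castSucc, by simp⟩)
  have hwT : w ∈ T := mem_sup_left (subset_span ⟨Fin.last n, by simp⟩)
  have hUT : U ∈ T := mem_sup_right (subset_span ⟨Fin.last n, by simp⟩)
  -- The transvection `φ` maps `span (v, u, U, y₀)` into `T`, kills `y₀` and sends `w` to `w + y₀`.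
  let φ : M →ₗ[R] M := LinearMap.id + (B.flip U).smulRight y₀
  have hφu : ∀ j, φ (u j) ∈ T := fun j => by
    have : φ (u j) = u₁ j + (B w (u j) + B w y₀ * B (u j) U) • U := by simp [φ, u₁]
    rw [this]
    exact add_mem (mem_sup_right (subset_span ⟨j.castSucc, by simp⟩)) (smul_mem _ _ hUT)
  have hφ : span R (range v) ⊔ span R (range u) ⊔ span R {U, y₀} ≤ T.comap φ := by
    refine sup_le (sup_le (span_le.2 (range_subset_iff.2 fun i => ?_))
      (span_le.2 (range_subset_iff.2 hφu))) (span_le.2 (insert_subset_iff.2 ⟨?_, ?_⟩))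
    · simpa [φ, hvU] using hvT i
    · simpa [φ, hB.self_eq_zero] using hUT
    · simp [φ, hy₀U]
  have hy₀T : y₀ ∈ T := by
    have hφw : w + y₀ ∈ T := by simpa [φ, hwU] using hφ hw
    simpa using sub_mem hφw hwT
  refine sup_le (span_le.2 (range_subset_iff.2 hvT)) (span_le.2 (range_subset_iff.2 fun j => ?_))
  have : u j = φ (u j) - B (u j) U • y₀ := by simp [φ]
  rw [this]
  exact sub_mem (hφu j) (smul_mem _ _ hy₀T)

end Extension

section StandardForm

variable {R : Type*} [CommRing R] {g : ℕ}

theorem symp_add_right (x y a : Fin (2 * g) → R) : symp x (y + a) = symp x y + symp x a := by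
  unfold symp
  rw [← Finset.sum_add_distrib]
  exact Finset.sum_congr rfl fun i _ => by simp only [Pi.add_apply]; ring

theorem symp_smul_right (c : R) (x a : Fin (2 * g) → R) : symp x (c • a) = c * symp x a := by
  unfold symp
  rw [Finset.mul_sum]
  exact Finset.sum_congr rfl fun i _ => by simp only [Pi.smul_apply, smul_eq_mul]; ring

variable (R g) in
def sympForm : LinearMap.BilinForm R (Fin (2 * g) → R) :=
  LinearMap.mk₂ R symp symp_add_left symp_smul_left symp_add_right symp_smul_right

theorem sympForm_apply (x y : Fin (2 * g) → R) : sympForm R g x y = symp x y := rfl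

theorem sympForm_isAlt : (sympForm R g).IsAlt := fun x => by
  simp [sympForm_apply, symp, mul_comm]

theorem symp_stdB (x : Fin (2 * g) → R) (i : Fin g) :
    symp x (stdB R g i) = x ⟨2 * i, by omega⟩ := by
  unfold symp stdB
  rw [Finset.sum_eq_single i (fun j _ hj => by simp [Fin.val_ne_of_ne hj]; omega) (by simp)]
  simp

theorem symp_stdA (x : Fin (2 * g) → R) (i : Fin g) :
    symp x (stdA R g i) = -x ⟨2 * i + 1, by omega⟩ := by
  unfold symp stdA
  rw [Finset.sum_eq_single i (fun j _ hj => by simp [Fin.val_ne_of_ne hj]; omega) (by simp)]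
  simp

theorem sympForm_flip_surjective : Function.Surjective (sympForm R g).flip := by
  have hproj : ∀ j, LinearMap.proj j ∈ LinearMap.range (sympForm R g).flip := by
    rintro ⟨j, hj⟩
    obtain ⟨i, rfl | rfl⟩ : ∃ i : Fin g, j = 2 * i ∨ j = 2 * i + 1 :=
      ⟨⟨j / 2, by omega⟩, by dsimp only; omega⟩
    · exact ⟨stdB R g i, LinearMap.ext fun x => symp_stdB x i⟩
    · refine ⟨-stdA R g i, LinearMap.ext fun x => ?_⟩
      change sympForm R g x (-stdA R g i) = x _
      rw [map_neg, sympForm_apply, symp_stdA, neg_neg]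
  intro f
  have hf : f = ∑ j, f (Pi.single j 1) • LinearMap.proj j := by
    ext x
    simp [Pi.single_apply]
  rw [← LinearMap.mem_range, hf]
  exact sum_mem fun j _ => smul_mem _ _ (hproj j)

end StandardForm

section BezoutDomain

variable {R : Type*} [CommRing R] [IsBezout R] [NormalizedGCDMonoid R] {g n : ℕ}

theorem exists_eq_smul_dual_apply_eq_one {ι : Type*} [Fintype ι] {t : ι → R}
    (ht : t ≠ 0) : ∃ (d : R) (t₀ : ι → R) (f : Module.Dual R (ι → R)),
      t = d • t₀ ∧ f t₀ = 1 := by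
  obtain ⟨j, -⟩ := Function.ne_iff.1 ht
  obtain ⟨t₀, ht₀, hgcd⟩ := Finset.extract_gcd t ⟨j, Finset.mem_univ j⟩
  obtain ⟨c, hc⟩ := Finset.gcd_eq_sum_mul Finset.univ t₀
  refine ⟨Finset.univ.gcd t, t₀, ∑ i, c i • LinearMap.proj i,
    funext fun i => ht₀ i (Finset.mem_univ i), ?_⟩
  simp [← hgcd, hc, mul_comm]

variable [IsDomain R] {v u : Fin n → Fin (2 * g) → R}

theorem exists_hyperbolic_pair_mem_orthogonalBilin (hvu : IsDualPair (sympForm R g) v u)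
    (hu : IsIsotropic (sympForm R g) u) (hn : n < g) {t : Fin (2 * g) → R}
    (ht : t ∈ (span R (range v) ⊔ span R (range u)).orthogonalBilin (sympForm R g)) :
    ∃ (d : R) (t₀ y₀ : Fin (2 * g) → R),
      t₀ ∈ (span R (range v) ⊔ span R (range u)).orthogonalBilin (sympForm R g) ∧
      y₀ ∈ (span R (range v) ⊔ span R (range u)).orthogonalBilin (sympForm R g) ∧
      sympForm R g t₀ y₀ = 1 ∧ t = d • t₀ := by
  set S := span R (range v) ⊔ span R (range u)
  obtain ⟨t', ht', ht'0, c, rfl⟩ : ∃ t' ∈ S.orthogonalBilin (sympForm R g), t' ≠ 0 ∧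
      ∃ c : R, t = c • t' := by
    by_cases h0 : t = 0
    · obtain ⟨m, hm, hm0⟩ := exists_mem_ne_zero_of_ne_bot
        (orthogonalBilin_sup_span_ne_bot sympForm_isAlt hvu hu (by simp; omega))
      exact ⟨m, hm, hm0, 0, by rw [h0, zero_smul]⟩
    · exact ⟨t, ht, h0, 1, (one_smul R t).symm⟩
  obtain ⟨d, t₀, f, rfl, hf⟩ := exists_eq_smul_dual_apply_eq_one ht'0
  have hd : d ≠ 0 := by rintro rfl; simp at ht'0
  have ht₀ : t₀ ∈ S.orthogonalBilin (sympForm R g) := fun s hs => by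
    have hs₀ := ht' s hs
    rw [map_smul, smul_eq_mul, mul_eq_zero] at hs₀
    exact hs₀.resolve_left hd
  obtain ⟨z, rfl⟩ := sympForm_flip_surjective f
  obtain ⟨s, hs, m, hm, rfl⟩ := mem_sup.1
    ((hvu.sup_orthogonalBilin_eq_top sympForm_isAlt hu) ▸ mem_top :
      z ∈ S ⊔ S.orthogonalBilin (sympForm R g))
  refine ⟨c * d, t₀, m, ht₀, hm, ?_, smul_smul c d t₀⟩
  simpa [sympForm_isAlt.eq_iff.1 (ht₀ s hs)] using hf

theorem exists_isDualPair_snoc (hvu : IsDualPair (sympForm R g) v u)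
    (hu : IsIsotropic (sympForm R g) u) (hn : n < g) {w y : Fin (2 * g) → R}
    (hyv : ∀ i, sympForm R g (v i) y = 0) (hwy : sympForm R g w y = 1) :
    ∃ u' : Fin (n + 1) → Fin (2 * g) → R, IsIsotropic (sympForm R g) u' ∧
      IsDualPair (sympForm R g) (Fin.snoc v w : Fin (n + 1) → Fin (2 * g) → R) u' ∧
      span R (range v) ⊔ span R (range u) ≤
        span R (range (Fin.snoc v w : Fin (n + 1) → Fin (2 * g) → R)) ⊔
          span R (range u') := by
  obtain ⟨s, hs, t, ht, rfl⟩ := mem_sup.1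
    ((hvu.sup_orthogonalBilin_eq_top sympForm_isAlt hu) ▸ mem_top :
      w ∈ _ ⊔ (span R (range v) ⊔ span R (range u)).orthogonalBilin (sympForm R g))
  obtain ⟨d, t₀, y₀, ht₀, hy₀, ht₀y₀, rfl⟩ :=
    exists_hyperbolic_pair_mem_orthogonalBilin hvu hu hn ht
  obtain ⟨U, hvU, hwU, hUy₀, hw⟩ :=
    exists_dual_vector_of_hyperbolic_pair sympForm_isAlt hvu hu hyv hwy ht₀ hy₀ ht₀y₀
      (d := d) (by simpa using hs)
  exact exists_isDualPair_snoc_of_dual_vector sympForm_isAlt hvu hu hvU hwU hUy₀ hy₀ hw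

theorem exists_isDualPair_append (hvu : IsDualPair (sympForm R g) v u)
    (hu : IsIsotropic (sympForm R g) u) {k : ℕ} (w : Fin k → Fin (2 * g) → R)
    (hk : n + k ≤ g) (hvw : ∃ y, IsDualPair (sympForm R g) (Fin.append v w) y) :
    ∃ u' : Fin (n + k) → Fin (2 * g) → R, IsIsotropic (sympForm R g) u' ∧
      IsDualPair (sympForm R g) (Fin.append v w) u' ∧
      span R (range v) ⊔ span R (range u) ≤
        span R (range (Fin.append v w)) ⊔ span R (range u') := by
  induction k with
  | zero =>
    have hv : Fin.append v w = v := by simp [Fin.append_right_nil v w rfl]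
    exact ⟨u, hu, by rw [hv]; exact hvu, by rw [hv]⟩
  | succ k ih =>
    obtain ⟨y, hy⟩ := hvw
    have hsnoc : Fin.append v w = Fin.snoc (Fin.append v (Fin.init w)) (w (Fin.last k)) := by
      rw [← Fin.append_snoc, Fin.snoc_init_self]
    rw [hsnoc] at hy ⊢
    obtain ⟨u₁, hiso₁, hdual₁, hspan₁⟩ := ih (Fin.init w) (by omega)
      ⟨_, by simpa using hy.comp (Fin.castSucc_injective _)⟩
    obtain ⟨u', hiso, hdual, hspan⟩ := exists_isDualPair_snoc hdual₁ hiso₁ (by omega)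
      (y := y (Fin.last _)) (fun i => by simpa using hy i.castSucc (Fin.last _))
      (by simpa using hy (Fin.last _) (Fin.last _))
    exact ⟨u', hiso, hdual, hspan₁.trans hspan⟩

end BezoutDomain

theorem IsUnimodular.exists_isDualPair {g m : ℕ} {x : Fin m → Fin (2 * g) → ℤ}
    (hx : IsUnimodular x) : ∃ y, IsDualPair (sympForm ℤ g) x y :=
  hx.2.elim fun _ hC => exists_isDualPair_of_isCompl sympForm_flip_surjective hx.1 hC

theorem stmt5_general (g n k : ℕ) (hg : n + k ≤ g)
    (v : Fin n → Fin (2 * g) → ℤ)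
    (u : Fin n → Fin (2 * g) → ℤ)
    (huiso : ∀ i j, symp (u i) (u j) = 0)
    (hdual : ∀ i j, symp (v i) (u j) = if i = j then 1 else 0)
    (w : Fin k → Fin (2 * g) → ℤ)
    (hvw : IsUnimodular (Fin.append v w)) :
    ∃ u' : Fin (n + k) → Fin (2 * g) → ℤ,
      IsUnimodular u' ∧
      (∀ i j, symp (u' i) (u' j) = 0) ∧
      (∀ i j, symp (Fin.append v w i) (u' j) = if i = j then 1 else 0) ∧
      Submodule.span ℤ (Set.range v) ⊔ Submodule.span ℤ (Set.range u) ≤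
        Submodule.span ℤ (Set.range (Fin.append v w)) ⊔ Submodule.span ℤ (Set.range u') := by
  obtain ⟨u', hiso, hpair, hspan⟩ :=
    exists_isDualPair_append hdual huiso w hg hvw.exists_isDualPair
  exact ⟨u', hpair.flip.isUnimodular, hiso, hpair, hspan⟩

/-- extending a dual summand, Prop. 2.11 (ii). -/
theorem stmt5 (g n k : ℕ) (hn : 1 ≤ n) (hk : 1 ≤ k) (hg : n + k ≤ g)
    (v : Fin n → Fin (2 * g) → ℤ) (hv : IsUnimodular v)
    (u : Fin n → Fin (2 * g) → ℤ) (hu : IsUnimodular u)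
    (huiso : ∀ i j, symp (u i) (u j) = 0)
    (hdual : ∀ i j, symp (v i) (u j) = if i = j then 1 else 0)
    (w : Fin k → Fin (2 * g) → ℤ)
    (hvw : IsUnimodular (Fin.append v w)) :
    ∃ u' : Fin (n + k) → Fin (2 * g) → ℤ,
      IsUnimodular u' ∧
      (∀ i j, symp (u' i) (u' j) = 0) ∧
      (∀ i j, symp (Fin.append v w i) (u' j) = if i = j then 1 else 0) ∧
      Submodule.span ℤ (Set.range v) ⊔ Submodule.span ℤ (Set.range u) ≤
        Submodule.span ℤ (Set.range (Fin.append v w)) ⊔ Submodule.span ℤ (Set.range u') :=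
  stmt5_general g n k hg v u huiso hdual w hvw

end Paper
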